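/- arXiv:2512.18939 — 2 statements merged into one kernel-verified Lean document; each statement's English description precedes it below -/
import Mathlib

section
/- Let γ: ℝ → ℝ be nonnegative, even, integrable, and supported in [-1,1]. Then ∫_{t=0}^{1} ∫_{z=t}^{t+1} (2zt − z²) γ(z) dz dt = 0. -/
/-!
Since `γ` vanishes beyond `1`, for `0 < t ≤ 1` the inner integral may stop at `1`. Swapping
the order of integration over the triangle `0 < t < z ≤ 1` leaves, for each `z`, the factor
`∫₀ᶻ (2zt - z²) dt = z³ - z³ = 0`.
-/

open MeasureTheory Set Function

theorem integral_Ioc_integral_Ioc_swap {E : Type*} [NormedAddCommGroup E] [NormedSpace ℝ E]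
    [CompleteSpace E] {a b : ℝ} {F : ℝ → ℝ → E}
    (hF : IntegrableOn (uncurry F) (Ioc a b ×ˢ Ioc a b)) :
    ∫ t in Ioc a b, ∫ z in Ioc t b, F t z = ∫ z in Ioc a b, ∫ t in Ioo a z, F t z := by
  set G : ℝ × ℝ → E := {p | p.1 < p.2}.indicator (uncurry F)
  have hG : Integrable G ((volume.restrict (Ioc a b)).prod (volume.restrict (Ioc a b))) := by
    rw [Measure.prod_restrict, ← Measure.volume_eq_prod]
    exact hF.indicator (measurableSet_lt measurable_fst measurable_snd)
  have hG_fst (t : ℝ) : (fun z => G (t, z)) = (Ioi t).indicator (F t) := by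
    ext z; simp [G, indicator]
  have hG_snd (z : ℝ) : (fun t => G (t, z)) = (Iio z).indicator (F · z) := by
    ext t; simp [G, indicator]
  calc ∫ t in Ioc a b, ∫ z in Ioc t b, F t z
      = ∫ t in Ioc a b, ∫ z in Ioc a b, G (t, z) := by
        refine setIntegral_congr_fun measurableSet_Ioc fun t ht => ?_
        rw [hG_fst, setIntegral_indicator measurableSet_Ioi, Ioc_inter_Ioi, max_eq_right ht.1.le]
    _ = ∫ z in Ioc a b, ∫ t in Ioc a b, G (t, z) := integral_integral_swap hG
    _ = ∫ z in Ioc a b, ∫ t in Ioo a z, F t z := by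
        refine setIntegral_congr_fun measurableSet_Ioc fun z hz => ?_
        have hIoo : Ioc a b ∩ Iio z = Ioo a z := by
          ext t
          simp only [mem_inter_iff, mem_Ioc, mem_Iio, mem_Ioo]
          grind
        rw [hG_snd, setIntegral_indicator measurableSet_Iio, hIoo]

theorem integral_two_mul_mul_sub_sq (z : ℝ) : ∫ t in (0 : ℝ)..z, (2 * z * t - z ^ 2) = 0 := by
  rw [intervalIntegral.integral_sub ((continuous_const_mul _).intervalIntegrable _ _)
      intervalIntegrable_const,
    intervalIntegral.integral_const_mul, integral_id, intervalIntegral.integral_const, smul_eq_mul]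
  ring

theorem stmt_1_general (γ : ℝ → ℝ)
    (hint : Integrable γ) (hsupp : ∀ s, 1 < |s| → γ s = 0) :
    (∫ t in (0:ℝ)..1, ∫ z in t..(t+1), (2 * z * t - z^2) * γ z) = 0 := by
  have hγ : IntegrableOn (fun p : ℝ × ℝ => γ p.2) (Ioc 0 1 ×ˢ Ioc 0 1) := by
    rw [IntegrableOn, Measure.volume_eq_prod, ← Measure.prod_restrict]
    exact hint.restrict.comp_snd _
  have hF : IntegrableOn (uncurry fun t z => (2 * z * t - z ^ 2) * γ z) (Ioc 0 1 ×ˢ Ioc 0 1) :=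
    hγ.continuousOn_mul_of_subset (by fun_prop) (isCompact_Icc.prod isCompact_Icc)
      (measurableSet_Ioc.prod measurableSet_Ioc) (prod_mono Ioc_subset_Icc_self Ioc_subset_Icc_self)
  calc (∫ t in (0:ℝ)..1, ∫ z in t..(t+1), (2 * z * t - z^2) * γ z)
      = ∫ t in Ioc 0 1, ∫ z in Ioc t 1, (2 * z * t - z ^ 2) * γ z := by
        rw [intervalIntegral.integral_of_le zero_le_one]
        refine setIntegral_congr_fun measurableSet_Ioc fun t ht => ?_
        rw [intervalIntegral.integral_of_le (by linarith),
          setIntegral_eq_of_subset_of_forall_sdiff_eq_zero measurableSet_Ioc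
            (Ioc_subset_Ioc_right (by linarith [ht.1]) : Ioc t 1 ⊆ Ioc t (t + 1))]
        rintro z ⟨⟨htz, -⟩, hz⟩
        have h1z : 1 < z := not_le.1 fun hz1 => hz ⟨htz, hz1⟩
        simp [hsupp z (h1z.trans_le (le_abs_self z))]
    _ = ∫ z in Ioc 0 1, ∫ t in Ioo 0 z, (2 * z * t - z ^ 2) * γ z :=
        integral_Ioc_integral_Ioc_swap hF
    _ = 0 := by
        refine (setIntegral_congr_fun measurableSet_Ioc fun z hz => ?_).trans (integral_zero _ _)
        rw [integral_mul_const, ← integral_Ioc_eq_integral_Ioo,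
          ← intervalIntegral.integral_of_le hz.1.le, integral_two_mul_mul_sub_sq, zero_mul]

theorem stmt_1 (γ : ℝ → ℝ)
    (hnn : ∀ s, 0 ≤ γ s) (heven : ∀ s, γ (-s) = γ s)
    (hint : Integrable γ) (hsupp : ∀ s, 1 < |s| → γ s = 0) :
    (∫ t in (0:ℝ)..1, ∫ z in t..(t+1), (2 * z * t - z^2) * γ z) = 0 :=
  stmt_1_general γ hint hsupp
end

section
/- Let γ₁, γ₂ be nonnegative, even, integrable functions supported in [-1,1], δ₁ ≤ δ₂, and let M ∈ ℝ. Suppose u₂: (α−δ₂, α+δ₂) → ℝ is continuous with u₂ ≤ M everywhere and u₂ ≡ M on (α, α+δ₁). If for every x ∈ (α−δ₂, α), ∫_{α+δ₁}^{α+δ₂} [u₂(x) − u₂(y)] γ_{δ₂}(x,y) dy + (1/2)∫_{α}^{α+δ₁} [M − M](γ_{δ₂} − γ_{δ₁}) dy ≤ 0 and u₂(x) = M, then u₂(y) = M for a.e. y ∈ (α+δ₁, α+δ₂) with |y−x| < δ₂ for some x with the kernel positive. -/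
open MeasureTheory

theorem stmt_13 (γ₁ γ₂ : ℝ → ℝ) (δ₁ δ₂ α M : ℝ) (u₂ : ℝ → ℝ)
    (hnn₁ : ∀ s, 0 ≤ γ₁ s) (heven₁ : ∀ s, γ₁ (-s) = γ₁ s)
    (hint₁ : Integrable γ₁) (hsupp₁ : ∀ s, 1 < |s| → γ₁ s = 0)
    (hnn₂ : ∀ s, 0 ≤ γ₂ s) (heven₂ : ∀ s, γ₂ (-s) = γ₂ s)
    (hint₂ : Integrable γ₂) (hsupp₂ : ∀ s, 1 < |s| → γ₂ s = 0)
    (hpos₂ : ∀ s, 0 < |s| → |s| < 1 → 0 < γ₂ s)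
    (hδ₁ : 0 < δ₁) (hδ : δ₁ ≤ δ₂)
    (hu₂cont : ContinuousOn u₂ (Set.Ioo (α - δ₂) (α + δ₂)))
    (hub : ∀ y ∈ Set.Ioo (α - δ₂) (α + δ₂), u₂ y ≤ M)
    (hM : ∀ y ∈ Set.Ioo α (α + δ₁), u₂ y = M)
    (x : ℝ) (hx : x ∈ Set.Ioo (α - δ₂) α) (hxM : u₂ x = M)
    (hflux : (∫ y in Set.Ioo (α + δ₁) (α + δ₂),
        (u₂ x - u₂ y) * (δ₂⁻¹^3 * γ₂ ((x - y)/δ₂)))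
      + (1/2) * (∫ y in Set.Ioo α (α + δ₁),
        (M - M) * ((δ₂⁻¹^3 * γ₂ ((x - y)/δ₂)) - (δ₁⁻¹^3 * γ₁ ((x - y)/δ₁)))) ≤ 0) :
    ∀ y ∈ Set.Ioo (α + δ₁) (α + δ₂), |y - x| < δ₂ → u₂ y = M := by
  have hδ₂ : (0:ℝ) < δ₂ := lt_of_lt_of_le hδ₁ hδ
  intro y₀ hy₀ hlt
  by_contra hne
  set g : ℝ → ℝ := fun y => (M - u₂ y) * (δ₂⁻¹ ^ 3 * γ₂ ((x - y) / δ₂)) with hg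
  set S : Set ℝ := Set.Ioo (α + δ₁) (α + δ₂) with hS
  set c : ℝ := x + δ₂ with hc
  have hxα : x < α := hx.2
  have hcb : c < α + δ₂ := by simp [hc, hxα]
  have hy₀x : x < y₀ := lt_trans (lt_trans hxα (by linarith [hy₀.1])) hy₀.1
  have hy₀c : y₀ < c := by
    have := abs_lt.1 hlt
    linarith [this.2]
  have hac : α + δ₁ < c := lt_trans hy₀.1 hy₀c
  -- subset facts
  have hSsub : S ⊆ Set.Ioo (α - δ₂) (α + δ₂) := by
    intro z hz
    exact ⟨by linarith [hz.1], hz.2⟩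
  -- the flux hypothesis simplifies
  have hflux' : (∫ y in S, g y) ≤ 0 := by
    have h2 : (∫ y in Set.Ioo α (α + δ₁),
        (M - M) * ((δ₂⁻¹^3 * γ₂ ((x - y)/δ₂)) - (δ₁⁻¹^3 * γ₁ ((x - y)/δ₁)))) = 0 := by
      simp
    rw [hxM] at hflux
    rw [h2, mul_zero, add_zero] at hflux
    exact hflux
  -- nonnegativity of g on S
  have hgnn : ∀ z ∈ S, 0 ≤ g z := by
    intro z hz
    have h1 : u₂ z ≤ M := hub z (hSsub hz)
    have h2 : 0 ≤ δ₂⁻¹ ^ 3 * γ₂ ((x - z) / δ₂) :=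
      mul_nonneg (pow_nonneg (inv_nonneg.2 hδ₂.le) 3) (hnn₂ _)
    exact mul_nonneg (by linarith) h2
  -- integrability of the kernel
  have hk : Integrable (fun y => δ₂⁻¹ ^ 3 * γ₂ ((x - y) / δ₂)) := by
    have h1 : Integrable (fun t => γ₂ (t / δ₂)) := hint₂.comp_div hδ₂.ne'
    have h2 : Integrable (fun y => γ₂ ((x - y) / δ₂)) := h1.comp_sub_left x
    exact h2.const_mul _
  -- integrability of g on S
  have hI : IntegrableOn g S := by
    have hsplit : Set.Ioc (α + δ₁) c ∪ Set.Ioo c (α + δ₂) = S :=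
      Set.Ioc_union_Ioo_eq_Ioo hac.le hcb
    have key : IntegrableOn g (Set.Ioc (α + δ₁) c ∪ Set.Ioo c (α + δ₂)) := ?_
    · rwa [hsplit] at key
    apply IntegrableOn.union
    · -- on Ioc (α+δ₁) c : bounded continuous times integrable
      have hKsub : Set.Icc (α + δ₁) c ⊆ Set.Ioo (α - δ₂) (α + δ₂) := by
        intro z hz
        exact ⟨by linarith [hz.1], lt_of_le_of_lt hz.2 hcb⟩
      have hcont : ContinuousOn (fun z => M - u₂ z) (Set.Icc (α + δ₁) c) :=
        (continuousOn_const.sub (hu₂cont.mono hKsub))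
      obtain ⟨C, hC⟩ := (isCompact_Icc).exists_bound_of_continuousOn hcont
      have hmeas : AEStronglyMeasurable (fun z => M - u₂ z)
          (volume.restrict (Set.Ioc (α + δ₁) c)) := by
        have : AEStronglyMeasurable (fun z => M - u₂ z) (volume.restrict (Set.Icc (α + δ₁) c)) :=
          hcont.aestronglyMeasurable measurableSet_Icc
        exact this.mono_measure (Measure.restrict_mono Set.Ioc_subset_Icc_self le_rfl)
      refine Integrable.bdd_mul (c := C) (hk.integrableOn) hmeas ?_
      filter_upwards [ae_restrict_mem measurableSet_Ioc] with z hz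
      exact hC z ⟨hz.1.le, hz.2⟩
    · -- on Ioo c (α+δ₂) : g vanishes
      have hzero : Set.EqOn g (fun _ => (0:ℝ)) (Set.Ioo c (α + δ₂)) := by
        intro z hz
        have h1 : (x - z) / δ₂ < -1 := by
          rw [div_lt_iff₀ hδ₂]
          have := hz.1
          simp only [hc] at this
          linarith
        have h2 : (1:ℝ) < |(x - z) / δ₂| := by
          rw [abs_of_neg (by linarith)]
          linarith
        simp [hg, hsupp₂ _ h2]
      rw [integrableOn_congr_fun hzero measurableSet_Ioo]
      exact integrableOn_zero
  -- the integral is zero, hence g = 0 a.e. on S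
  have hge : (∫ y in S, g y) = 0 :=
    le_antisymm hflux' (setIntegral_nonneg measurableSet_Ioo hgnn)
  have hae : g =ᵐ[volume.restrict S] 0 := by
    refine (integral_eq_zero_iff_of_nonneg_ae ?_ hI).1 hge
    filter_upwards [ae_restrict_mem measurableSet_Ioo] with z hz using hgnn z hz
  -- find an interval around y₀ where g > 0
  have hy₀mem : y₀ ∈ Set.Ioo (α - δ₂) (α + δ₂) := hSsub hy₀
  have hlt' : u₂ y₀ < M := lt_of_le_of_ne (hub y₀ hy₀mem) hne
  have hcontAt : ContinuousAt u₂ y₀ :=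
    hu₂cont.continuousAt (Ioo_mem_nhds hy₀mem.1 hy₀mem.2)
  have hV : u₂ ⁻¹' Set.Iio M ∈ nhds y₀ := hcontAt.preimage_mem_nhds (Iio_mem_nhds hlt')
  have hW : Set.Ioo (α + δ₁) c ∈ nhds y₀ := Ioo_mem_nhds hy₀.1 hy₀c
  obtain ⟨a', b', hy₀ab, hab⟩ := mem_nhds_iff_exists_Ioo_subset.1 (Filter.inter_mem hV hW)
  set J : Set ℝ := Set.Ioo a' b' with hJ
  have hJsub : J ⊆ Set.Ioo (α + δ₁) c := fun z hz => (hab hz).2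
  have hJS : J ⊆ S := fun z hz => ⟨(hJsub hz).1, lt_trans (hJsub hz).2 hcb⟩
  have hJpos : ∀ z ∈ J, 0 < g z := by
    intro z hz
    have hz1 := hJsub hz
    have hu : u₂ z < M := (hab hz).1
    have hxz : x < z := lt_trans hxα (by linarith [hz1.1])
    have hs1 : (x - z) / δ₂ < 0 := div_neg_of_neg_of_pos (by linarith) hδ₂
    have hs2 : -1 < (x - z) / δ₂ := by
      rw [lt_div_iff₀ hδ₂]
      have := hz1.2
      simp only [hc] at this
      linarith
    have hγ : 0 < γ₂ ((x - z) / δ₂) :=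
      hpos₂ _ (abs_pos.2 hs1.ne) (abs_lt.2 ⟨hs2, by linarith⟩)
    exact mul_pos (by linarith) (mul_pos (pow_pos (inv_pos.2 hδ₂) 3) hγ)
  -- contradiction
  have hnull : volume.restrict S {z | ¬ g z = 0} = 0 := by
    have := hae
    rw [Filter.EventuallyEq, ae_iff] at this
    simpa using this
  have hJle : volume.restrict S J ≤ volume.restrict S {z | ¬ g z = 0} := by
    apply measure_mono
    intro z hz
    exact (hJpos z hz).ne'
  have hJvol : volume.restrict S J = volume J := by
    rw [Measure.restrict_apply measurableSet_Ioo, Set.inter_eq_left.2 hJS]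
  have hJpos' : (0:ENNReal) < volume J := by
    rw [hJ, Real.volume_Ioo]
    exact ENNReal.ofReal_pos.2 (by linarith [hy₀ab.1, hy₀ab.2])
  rw [hnull, hJvol] at hJle
  exact absurd hJle (not_le.2 hJpos')
end
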